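/- arXiv:2406.03025 — 4 statements merged into one kernel-verified Lean document; each statement's English description precedes it below -/
import Mathlib

section
/- For every integer s ≥ 0, each of the trees τ_{2^s - 1}, τ_{2^s}, ..., τ_{2(2^s - 1)} contains cb(s) = τ_{2^s-1} as a subset, and each is strictly contained in cb(s+1) = τ_{2^{s+1}-1}. -/
/-- Words over the alphabet {1,2}, encoded as lists of booleans (`false` = 1, `true` = 2). -/
abbrev Word := List Bool

/-- Longest common prefix of two words (`u ∧ v`). -/
def lcp : Word → Word → Word
  | a :: as, b :: bs => if a = b then a :: lcp as bs else []
  | _, _ => []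

/-- The lexicographic (strict) order on words; a strict prefix is smaller. -/
def wlex (u v : Word) : Prop := List.Lex (· < ·) u v

/-- A binary tree: a finite, prefix-closed set of words containing the empty word. -/
def IsBinaryTree (t : Set Word) : Prop :=
  t.Finite ∧ ([] : Word) ∈ t ∧ ∀ u ∈ t, ∀ v : Word, v <+: u → v ∈ t

/-- Fullness: each vertex has either zero or two children. -/
def IsFull (t : Set Word) : Prop :=
  ∀ u ∈ t, (u ++ [false] ∈ t ↔ u ++ [true] ∈ t)

def IsFullBinaryTree (t : Set Word) : Prop := IsBinaryTree t ∧ IsFull t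

/-- `φ` is an embedding of `t` into `t'`: injective on `t`, strictly increasing for the
lexicographic order, and preserving longest common prefixes. -/
def IsEmbedding (t t' : Set Word) (φ : Word → Word) : Prop :=
  (∀ u ∈ t, φ u ∈ t') ∧
  (∀ u ∈ t, ∀ v ∈ t, u ≠ v → φ u ≠ φ v) ∧
  (∀ u ∈ t, ∀ v ∈ t, wlex u v → wlex (φ u) (φ v)) ∧
  (∀ u ∈ t, ∀ v ∈ t, φ (lcp u v) = lcp (φ u) (φ v))

/-- `t` can be embedded in `t'`. -/
def Embeds (t t' : Set Word) : Prop := ∃ φ, IsEmbedding t t' φ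

/-- `graft b t = b · t`, the copy of `t` rooted at the child `b` of the root. -/
def graft (b : Bool) (t : Set Word) : Set Word := (fun w => b :: w) '' t

/-- The interpolating trees: τ₀ = {∅}, τ₁ = {∅,1,2},
τ_{2m} = {∅} ∪ 1·τ_m ∪ 2·τ_{m-1}, τ_{2m+1} = {∅} ∪ 1·τ_m ∪ 2·τ_m (for m ≥ 1). -/
def tau : ℕ → Set Word
  | 0 => {[]}
  | 1 => {[], [false], [true]}
  | n + 2 => {[]} ∪ graft false (tau ((n + 2) / 2)) ∪ graft true (tau ((n + 1) / 2))
termination_by n => n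
decreasing_by all_goals omega

/-- The subtree of `t` rooted at `u`: θ_u t = {v : uv ∈ t}. -/
def subtreeAt (u : Word) (t : Set Word) : Set Word := {v | u ++ v ∈ t}

/-- The refined Horton–Strahler number S(t) = max {r : τ_r embeds in t}. -/
noncomputable def RHS (t : Set Word) : ℕ := sSup {r | Embeds (tau r) t}

/-- S_u(t) = S(θ_u t). -/
noncomputable def Sv (u : Word) (t : Set Word) : ℕ := RHS (subtreeAt u t)

/-- The set of internal vertices of `t` (those having a child in `t`). -/
def internals (t : Set Word) : Set Word :=
  {u | u ∈ t ∧ (u ++ [false] ∈ t ∨ u ++ [true] ∈ t)}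

lemma tau_two (n : ℕ) :
    tau (n + 2) = {[]} ∪ graft false (tau ((n + 2) / 2)) ∪ graft true (tau ((n + 1) / 2)) := by
  rw [tau]

lemma nil_mem_tau (n : ℕ) : ([] : Word) ∈ tau n := by
  match n with
  | 0 => rw [tau]; rfl
  | 1 => rw [tau]; left; rfl
  | n + 2 => rw [tau_two]; left; left; rfl

lemma tau_mono_succ (n : ℕ) : tau n ⊆ tau (n + 1) := by
  induction n using Nat.strong_induction_on with
  | _ n ih =>
    match n with
    | 0 =>
      rw [tau, tau]
      intro w hw; rw [Set.mem_singleton_iff] at hw; subst hw; left; rfl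
    | 1 =>
      rw [tau, tau_two]
      intro w hw
      rcases hw with h | h | h
      · left; left; exact h
      · subst h; left; right; exact ⟨[], nil_mem_tau _, rfl⟩
      · rw [Set.mem_singleton_iff] at h; subst h
        right; exact ⟨[], nil_mem_tau _, rfl⟩
    | n + 2 =>
      rw [tau_two, show n + 2 + 1 = (n + 1) + 2 by ring, tau_two]
      have h1 : tau ((n + 2) / 2) ⊆ tau ((n + 1 + 2) / 2) := by
        rcases Nat.lt_or_ge ((n + 2) / 2) ((n + 3) / 2) with h | h
        · have : (n + 3) / 2 = (n + 2) / 2 + 1 := by omega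
          rw [this]; exact ih _ (by omega)
        · have : (n + 3) / 2 = (n + 2) / 2 := by omega
          rw [this]
      have h2 : tau ((n + 1) / 2) ⊆ tau ((n + 1 + 1) / 2) := by
        rcases Nat.lt_or_ge ((n + 1) / 2) ((n + 2) / 2) with h | h
        · have : (n + 2) / 2 = (n + 1) / 2 + 1 := by omega
          rw [this]; exact ih _ (by omega)
        · have : (n + 2) / 2 = (n + 1) / 2 := by omega
          rw [this]
      intro w hw
      rcases hw with (h | ⟨v, hv, rfl⟩) | ⟨v, hv, rfl⟩
      · left; left; exact h
      · left; right; exact ⟨v, h1 hv, rfl⟩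
      · right; exact ⟨v, h2 hv, rfl⟩

lemma tau_mono {m n : ℕ} (h : m ≤ n) : tau m ⊆ tau n := by
  induction n with
  | zero => simp_all
  | succ n ih =>
    rcases Nat.lt_or_ge m (n + 1) with h' | h'
    · exact (ih (by omega)).trans (tau_mono_succ n)
    · have : m = n + 1 := by omega
      subst this; exact subset_rfl

lemma replicate_mem_tau (k n : ℕ) :
    List.replicate k true ∈ tau n ↔ 2 ^ k ≤ n + 1 := by
  induction n using Nat.strong_induction_on generalizing k with
  | _ n ih =>
    match n, k with
    | n, 0 => simpa using nil_mem_tau n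
    | 0, k + 1 =>
      rw [tau]
      constructor
      · intro h; simp [List.replicate_succ] at h
      · intro h
        exfalso
        have : 1 < 2 ^ (k + 1) := Nat.one_lt_pow (by omega) (by omega)
        omega
    | 1, k + 1 =>
      rw [tau]
      constructor
      · intro h
        rcases h with h | h | h <;> simp [List.replicate_succ] at h <;> try omega
        all_goals (subst k; simp [pow_succ])
      · intro h
        have : k = 0 := by
          by_contra hk
          have : 2 ^ (k+1) ≥ 4 := by
            calc 4 = 2^2 := by norm_num
            _ ≤ 2 ^ (k+1) := Nat.pow_le_pow_right (by norm_num) (by omega)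
          omega
        subst this; right; right; rfl
    | n + 2, k + 1 =>
      rw [tau_two, List.replicate_succ]
      have hmem : (true :: List.replicate k true ∈
          {([] : Word)} ∪ graft false (tau ((n + 2) / 2)) ∪ graft true (tau ((n + 1) / 2)))
          ↔ List.replicate k true ∈ tau ((n + 1) / 2) := by
        constructor
        · rintro ((h | ⟨v, hv, hv'⟩) | ⟨v, hv, hv'⟩)
          · simp at h
          · simp at hv'
          · simp at hv'; rwa [← hv']
        · intro h; right; exact ⟨_, h, rfl⟩
      rw [hmem, ih _ (by omega)]
      omega

/-- For every `s ≥ 0`, each of `τ_{2^s−1}, …, τ_{2(2^s−1)}` contains `cb(s) = τ_{2^s−1}`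
and is strictly contained in `cb(s+1) = τ_{2^{s+1}−1}`. -/
theorem tau_between_complete_trees (s i : ℕ)
    (h1 : 2 ^ s - 1 ≤ i) (h2 : i ≤ 2 * (2 ^ s - 1)) :
    tau (2 ^ s - 1) ⊆ tau i ∧ tau i ⊂ tau (2 ^ (s + 1) - 1) := by
  have hpow : 1 ≤ 2 ^ s := Nat.one_le_two_pow
  refine ⟨tau_mono h1, tau_mono (by omega), fun hsub => ?_⟩
  have hin : List.replicate (s + 1) true ∈ tau (2 ^ (s + 1) - 1) := by
    rw [replicate_mem_tau]
    have : 1 ≤ 2 ^ (s + 1) := Nat.one_le_two_pow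
    omega
  have := (replicate_mem_tau (s + 1) i).mp (hsub hin)
  rw [pow_succ] at this
  omega
end

section
/- For any full binary tree t ≠ {∅}, the refined Horton–Strahler number satisfies the recursion S(t) = max( S_1(t), S_2(t), 2·min(S_1(t), S_2(t)) + 1[S_1(t) > S_2(t)] + 1 ), where S_i(t) = S(θ_i t) is the refined Horton–Strahler number of the subtree rooted at child i of the root. -/
/-!
An embedding of `τ_r` (`r ≥ 1`) into `t` either sends the root to a vertex `c·w`, and then, since
it preserves longest common prefixes, its whole image lies in the subtree `θ_c t`; or it sends the
root to the root, and then lexicographic monotonicity together with `lcp (1u) (2v) = ∅` forces the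
branch `1·τ_{⌊r/2⌋}` into `1·θ₁t` and the branch `2·τ_{⌊(r-1)/2⌋}` into `2·θ₂t`. Conversely these
pieces reassemble. Since `τ_r` embeds in `τ_s` for `r ≤ s`, we have `r ≤ S(t)` iff `τ_r` embeds
in `t`, hence `r ≤ S(t)` iff `r = 0`, `r ≤ S₁`, `r ≤ S₂`, or `⌊r/2⌋ ≤ S₁ ∧ ⌊(r-1)/2⌋ ≤ S₂`;
the recursion is the arithmetic form of this last condition.
-/

theorem lcp_nil_left (v : Word) : lcp [] v = [] := by
  cases v <;> rfl

theorem lcp_cons_cons (a b : Bool) (x y : Word) :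
    lcp (a :: x) (b :: y) = if a = b then a :: lcp x y else [] :=
  rfl

theorem exists_eq_cons_of_lcp_eq_cons {x y w : Word} {c : Bool} (h : lcp x y = c :: w) :
    ∃ y', y = c :: y' := by
  match x, y, h with
  | a :: x, b :: y, h =>
    rw [lcp_cons_cons] at h
    split_ifs at h with hab
    obtain ⟨rfl, -⟩ := List.cons_eq_cons.mp h
    exact ⟨y, by rw [hab]⟩

theorem not_wlex_nil_right (x : Word) : ¬ wlex x [] := by
  rintro ⟨⟩

theorem wlex_nil_cons (b : Bool) (y : Word) : wlex [] (b :: y) :=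
  List.Lex.nil

theorem wlex_cons_cons {a b : Bool} {x y : Word} :
    wlex (a :: x) (b :: y) ↔ a < b ∨ a = b ∧ wlex x y := by
  constructor
  · rintro (_ | h | h)
    · exact Or.inl h
    · exact Or.inr ⟨rfl, h⟩
  · rintro (h | ⟨rfl, h⟩)
    · exact List.Lex.rel h
    · exact List.Lex.cons h

theorem heads_of_wlex_of_lcp_eq_nil {x y : Word} (hx : x ≠ []) (hy : y ≠ [])
    (hl : lcp x y = []) (hw : wlex x y) : (∃ x', x = false :: x') ∧ ∃ y', y = true :: y' := by
  match x, y, hx, hy with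
  | a :: x, b :: y, _, _ =>
    rw [lcp_cons_cons] at hl
    rw [wlex_cons_cons] at hw
    cases a <;> cases b <;> simp_all [Bool.lt_iff]

def node (a b : Set Word) : Set Word := {[]} ∪ graft false a ∪ graft true b

@[simp] theorem nil_mem_node (a b : Set Word) : [] ∈ node a b := by
  simp [node]

@[simp] theorem cons_mem_node {a b : Set Word} {c : Bool} {x : Word} :
    c :: x ∈ node a b ↔ x ∈ cond c b a := by
  cases c <;> simp [node, graft]

theorem tau_node {r : ℕ} (hr : 1 ≤ r) : tau r = node (tau (r / 2)) (tau ((r - 1) / 2)) := by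
  match r, hr with
  | 1, _ =>
    ext w
    rcases w with _ | ⟨_ | _, _ | x⟩ <;> simp [tau]
  | n + 2, _ => rw [tau]; rfl

theorem node_subtreeAt_subset {t : Set Word} (ht : [] ∈ t) :
    node (subtreeAt [false] t) (subtreeAt [true] t) ⊆ t := by
  rintro (_ | ⟨c, x⟩) hx
  · exact ht
  · cases c <;> simpa [subtreeAt] using hx

theorem encard_node (a b : Set Word) : (node a b).encard = 1 + a.encard + b.encard := by
  have hdisj : Disjoint ({[]} ∪ graft false a) (graft true b) := by
    simp [Set.disjoint_left, graft]
  have hdisj' : Disjoint ({[]} : Set Word) (graft false a) := by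
    simp [graft]
  rw [node, Set.encard_union_eq hdisj, Set.encard_union_eq hdisj', Set.encard_singleton, graft,
    graft, List.cons_injective.encard_image, List.cons_injective.encard_image]

@[simp] theorem nil_mem_tau_s7 (r : ℕ) : [] ∈ tau r := by
  rcases Nat.eq_zero_or_pos r with rfl | hr
  · simp [tau]
  · simp [tau_node hr]

theorem add_one_le_encard_tau (r : ℕ) : (r + 1 : ℕ∞) ≤ (tau r).encard := by
  induction r using Nat.strong_induction_on with
  | _ r ih =>
    rcases Nat.eq_zero_or_pos r with rfl | hr
    · simp [tau]
    · rw [tau_node hr, encard_node]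
      calc (r + 1 : ℕ∞) ≤ (1 + (r / 2 + 1) + ((r - 1) / 2 + 1) : ℕ) := by
            exact_mod_cast (by omega : r + 1 ≤ 1 + (r / 2 + 1) + ((r - 1) / 2 + 1))
        _ ≤ _ := by push_cast; gcongr <;> exact_mod_cast ih _ (by omega)

theorem Set.Finite.subtreeAt {t : Set Word} (ht : t.Finite) (u : Word) :
    (subtreeAt u t).Finite :=
  ht.preimage (List.append_right_injective u).injOn

@[simp] theorem nil_mem_subtreeAt {t : Set Word} {u : Word} : [] ∈ subtreeAt u t ↔ u ∈ t := by
  simp [subtreeAt]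

namespace IsEmbedding

variable {s t : Set Word} {φ : Word → Word}

theorem encard_le (hφ : IsEmbedding s t φ) : s.encard ≤ t.encard := by
  obtain ⟨hmem, hinj, -, -⟩ := hφ
  have hinjOn : Set.InjOn φ s := fun u hu v hv huv => by_contra fun hne => hinj u hu v hv hne huv
  calc s.encard = (φ '' s).encard := hinjOn.encard_image.symm
    _ ≤ t.encard := Set.encard_le_encard (Set.image_subset_iff.mpr hmem)

theorem comp_cons (hφ : IsEmbedding s t φ) {a : Set Word} {b : Bool} (h : ∀ u ∈ a, b :: u ∈ s) :
    IsEmbedding a t (fun u => φ (b :: u)) := by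
  obtain ⟨hmem, hinj, hlex, hlcp⟩ := hφ
  refine ⟨fun u hu => hmem _ (h u hu), fun u hu v hv huv => ?_, fun u hu v hv huv => ?_,
    fun u hu v hv => ?_⟩
  · exact hinj _ (h u hu) _ (h v hv) (by simpa using huv)
  · exact hlex _ (h u hu) _ (h v hv) (wlex_cons_cons.mpr (Or.inr ⟨rfl, huv⟩))
  · rw [← hlcp _ (h u hu) _ (h v hv), lcp_cons_cons, if_pos rfl]

theorem tail (hφ : IsEmbedding s t φ) {b : Bool} (h : ∀ u ∈ s, ∃ w, φ u = b :: w) :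
    IsEmbedding s (subtreeAt [b] t) (fun u => (φ u).tail) := by
  obtain ⟨hmem, hinj, hlex, hlcp⟩ := hφ
  choose! ψ hψ using h
  refine ⟨fun u hu => ?_, fun u hu v hv huv => ?_, fun u hu v hv huv => ?_, fun u hu v hv => ?_⟩
  · simpa [subtreeAt, hψ u hu] using hmem u hu
  · simpa [hψ u hu, hψ v hv] using hinj u hu v hv huv
  · simpa [hψ u hu, hψ v hv, wlex_cons_cons] using hlex u hu v hv huv
  · simp [hlcp u hu v hv, hψ u hu, hψ v hv, lcp_cons_cons]

theorem embeds_subtreeAt_of_root_eq_cons (hφ : IsEmbedding s t φ) (hs : [] ∈ s) {c : Bool}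
    {w : Word} (h : φ [] = c :: w) : Embeds s (subtreeAt [c] t) :=
  ⟨_, hφ.tail fun u hu =>
    exists_eq_cons_of_lcp_eq_cons (by rw [← hφ.2.2.2 [] hs u hu, lcp_nil_left, h])⟩

theorem heads_of_root_eq_nil {a b : Set Word} (hφ : IsEmbedding (node a b) t φ) (h : φ [] = [])
    {x y : Word} (hx : x ∈ a) (hy : y ∈ b) :
    (∃ x', φ (false :: x) = false :: x') ∧ ∃ y', φ (true :: y) = true :: y' := by
  obtain ⟨-, hinj, hlex, hlcp⟩ := hφ
  have hx' : false :: x ∈ node a b := cons_mem_node.mpr hx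
  have hy' : true :: y ∈ node a b := cons_mem_node.mpr hy
  apply heads_of_wlex_of_lcp_eq_nil
  · rw [← h]; exact hinj _ hx' _ (nil_mem_node a b) (List.cons_ne_nil _ _)
  · rw [← h]; exact hinj _ hy' _ (nil_mem_node a b) (List.cons_ne_nil _ _)
  · rw [← hlcp _ hx' _ hy', lcp_cons_cons, if_neg Bool.false_ne_true, h]
  · exact hlex _ hx' _ hy' (wlex_cons_cons.mpr (Or.inl Bool.false_lt_true))

theorem embeds_branches_of_root_eq_nil {a b : Set Word} (hφ : IsEmbedding (node a b) t φ)
    (h : φ [] = []) (ha : [] ∈ a) (hb : [] ∈ b) :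
    Embeds a (subtreeAt [false] t) ∧ Embeds b (subtreeAt [true] t) :=
  ⟨⟨_, (hφ.comp_cons fun _ hu => cons_mem_node.mpr hu).tail
      fun _ hu => (hφ.heads_of_root_eq_nil h hu hb).1⟩,
    ⟨_, (hφ.comp_cons fun _ hu => cons_mem_node.mpr hu).tail
      fun _ hu => (hφ.heads_of_root_eq_nil h ha hu).2⟩⟩

end IsEmbedding

namespace Embeds

theorem of_subset {s t : Set Word} (h : s ⊆ t) : Embeds s t :=
  ⟨id, h, fun _ _ _ _ => id, fun _ _ _ _ => id, fun _ _ _ _ => rfl⟩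

theorem trans {a b c : Set Word} (hab : Embeds a b) (hbc : Embeds b c) : Embeds a c := by
  obtain ⟨φ, hmem, hinj, hlex, hlcp⟩ := hab
  obtain ⟨ψ, hmem', hinj', hlex', hlcp'⟩ := hbc
  refine ⟨ψ ∘ φ, fun u hu => hmem' _ (hmem u hu), fun u hu v hv huv => ?_,
    fun u hu v hv huv => ?_, fun u hu v hv => ?_⟩
  · exact hinj' _ (hmem u hu) _ (hmem v hv) (hinj u hu v hv huv)
  · exact hlex' _ (hmem u hu) _ (hmem v hv) (hlex u hu v hv huv)
  · rw [Function.comp_apply, hlcp u hu v hv, hlcp' _ (hmem u hu) _ (hmem v hv)]; rfl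

theorem subtreeAt_self (b : Bool) (t : Set Word) : Embeds (subtreeAt [b] t) t :=
  let ⟨_, hid⟩ := of_subset (subset_refl t)
  ⟨_, hid.comp_cons fun _ hu => hu⟩

theorem node_mono {a a' b b' : Set Word} (ha : Embeds a a') (hb : Embeds b b') :
    Embeds (node a b) (node a' b') := by
  obtain ⟨φ, hφ⟩ := ha
  obtain ⟨ψ, hψ⟩ := hb
  have hbranch (c : Bool) : IsEmbedding (cond c b a) (cond c b' a') (cond c ψ φ) := by
    cases c <;> assumption
  refine ⟨fun | [] => [] | c :: u => c :: cond c ψ φ u, ?_, ?_, ?_, ?_⟩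
  · rintro (_ | ⟨c, x⟩) hx
    · exact nil_mem_node a' b'
    · exact cons_mem_node.mpr ((hbranch c).1 x (cons_mem_node.mp hx))
  · rintro (_ | ⟨c, x⟩) hx (_ | ⟨d, y⟩) hy hne <;>
      simp only [ne_eq, reduceCtorEq, not_false_eq_true]
    · exact absurd rfl hne
    · rw [cons_mem_node] at hx hy
      intro heq
      obtain ⟨rfl, heq⟩ := List.cons_eq_cons.mp heq
      exact (hbranch c).2.1 x hx y hy (by simpa using hne) heq
  · rintro (_ | ⟨c, x⟩) hx (_ | ⟨d, y⟩) hy h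
    · nomatch h
    · exact wlex_nil_cons _ _
    · exact absurd h (not_wlex_nil_right _)
    · rw [cons_mem_node] at hx hy
      rw [wlex_cons_cons] at h ⊢
      rcases h with h | ⟨rfl, h⟩
      · exact Or.inl h
      · exact Or.inr ⟨rfl, (hbranch c).2.2.1 x hx y hy h⟩
  · rintro (_ | ⟨c, x⟩) hx (_ | ⟨d, y⟩) hy
    · rfl
    · rfl
    · rfl
    · rw [cons_mem_node] at hx hy
      simp only [lcp_cons_cons]
      split_ifs with hcd
      · subst hcd
        exact congrArg (c :: ·) ((hbranch c).2.2.2 x hx y hy)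
      · rfl

end Embeds

theorem embeds_node_iff {a b t : Set Word} (ha : [] ∈ a) (hb : [] ∈ b) (ht : [] ∈ t) :
    Embeds (node a b) t ↔ Embeds (node a b) (subtreeAt [false] t) ∨
      Embeds (node a b) (subtreeAt [true] t) ∨
      Embeds a (subtreeAt [false] t) ∧ Embeds b (subtreeAt [true] t) := by
  constructor
  · rintro ⟨φ, hφ⟩
    rcases hroot : φ [] with _ | ⟨_ | _, w⟩
    · exact Or.inr (Or.inr (hφ.embeds_branches_of_root_eq_nil hroot ha hb))
    · exact Or.inl (hφ.embeds_subtreeAt_of_root_eq_cons (nil_mem_node a b) hroot)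
    · exact Or.inr (Or.inl (hφ.embeds_subtreeAt_of_root_eq_cons (nil_mem_node a b) hroot))
  · rintro (h | h | ⟨h₁, h₂⟩)
    · exact h.trans (Embeds.subtreeAt_self _ t)
    · exact h.trans (Embeds.subtreeAt_self _ t)
    · exact (Embeds.node_mono h₁ h₂).trans (Embeds.of_subset (node_subtreeAt_subset ht))

theorem embeds_tau_zero {t : Set Word} (ht : [] ∈ t) : Embeds (tau 0) t :=
  Embeds.of_subset (by simpa [tau] using ht)

theorem embeds_tau_iff {t : Set Word} (ht : [] ∈ t) {r : ℕ} :
    Embeds (tau r) t ↔ r = 0 ∨ Embeds (tau r) (subtreeAt [false] t) ∨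
      Embeds (tau r) (subtreeAt [true] t) ∨
      Embeds (tau (r / 2)) (subtreeAt [false] t) ∧
        Embeds (tau ((r - 1) / 2)) (subtreeAt [true] t) := by
  rcases Nat.eq_zero_or_pos r with rfl | hr
  · simp [embeds_tau_zero ht]
  · rw [tau_node hr, embeds_node_iff (nil_mem_tau_s7 _) (nil_mem_tau_s7 _) ht]
    simp [hr.ne']

theorem Embeds.tau_of_le {r s : ℕ} (h : r ≤ s) : Embeds (tau r) (tau s) := by
  induction s using Nat.strong_induction_on generalizing r with
  | _ s ih =>
    rcases Nat.eq_zero_or_pos r with rfl | hr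
    · exact embeds_tau_zero (nil_mem_tau_s7 s)
    · rw [tau_node hr, tau_node (hr.trans_le h)]
      exact Embeds.node_mono (ih _ (by omega) (by omega)) (ih _ (by omega) (by omega))

theorem bddAbove_embeds_tau {t : Set Word} (ht : t.Finite) : BddAbove {r | Embeds (tau r) t} := by
  refine ⟨t.ncard, fun r ⟨_, hφ⟩ => ?_⟩
  have h := (add_one_le_encard_tau r).trans hφ.encard_le
  rw [← ht.cast_ncard_eq] at h
  exact_mod_cast (le_add_right le_rfl).trans h

theorem le_RHS_iff {t : Set Word} (ht : t.Finite) (hnil : [] ∈ t) {r : ℕ} :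
    r ≤ RHS t ↔ Embeds (tau r) t :=
  ⟨fun h => (Embeds.tau_of_le h).trans
      (Nat.sSup_mem ⟨0, embeds_tau_zero hnil⟩ (bddAbove_embeds_tau ht)),
    fun h => le_csSup (bddAbove_embeds_tau ht) h⟩

theorem IsFullBinaryTree.children_mem {t : Set Word} (ht : IsFullBinaryTree t)
    (hne : t ≠ {[]}) : [false] ∈ t ∧ [true] ∈ t := by
  obtain ⟨⟨-, hnil, hpre⟩, hfull⟩ := ht
  obtain ⟨u, hu, hune⟩ : ∃ u ∈ t, u ≠ [] := by
    by_contra! h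
    exact hne (Set.eq_singleton_iff_unique_mem.mpr ⟨hnil, h⟩)
  obtain ⟨c, u, rfl⟩ := List.exists_cons_of_ne_nil hune
  have hc : [c] ∈ t := hpre _ hu [c] ⟨u, rfl⟩
  have hroot := hfull [] hnil
  cases c
  · exact ⟨hc, hroot.mp hc⟩
  · exact ⟨hroot.mpr hc, hc⟩

/-- For a full binary tree `t ≠ {∅}`,
`S(t) = max(S₁(t), S₂(t), 2·min(S₁(t), S₂(t)) + 1[S₁(t) > S₂(t)] + 1)`. -/
theorem rhs_recursion (t : Set Word) (ht : IsFullBinaryTree t)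
    (hne : t ≠ {([] : Word)}) :
    RHS t =
      max (max (Sv [false] t) (Sv [true] t))
        (2 * min (Sv [false] t) (Sv [true] t) +
          (if Sv [true] t < Sv [false] t then 1 else 0) + 1) := by
  obtain ⟨h₁, h₂⟩ := ht.children_mem hne
  obtain ⟨⟨hfin, hnil, -⟩, -⟩ := ht
  have key (r : ℕ) : r ≤ RHS t ↔ r = 0 ∨ r ≤ Sv [false] t ∨ r ≤ Sv [true] t ∨
      r / 2 ≤ Sv [false] t ∧ (r - 1) / 2 ≤ Sv [true] t := by
    simp only [Sv, le_RHS_iff hfin hnil,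
      le_RHS_iff (hfin.subtreeAt _) (nil_mem_subtreeAt.mpr h₁),
      le_RHS_iff (hfin.subtreeAt _) (nil_mem_subtreeAt.mpr h₂)]
    exact embeds_tau_iff hnil
  refine eq_of_forall_le_iff fun r => ?_
  rw [key]
  split_ifs <;> omega
end

section
/- Let d be a Dyck path of length 2n with height h = ‖d‖ ≥ 1, and m = ⌊h/2⌋. Define σ_max = min{i : d(i) = h}, σ_g = max{i ≤ σ_max : d(i) = m}, σ_d = min{i ≥ σ_max : d(i) = m}, and d^fix(i) = d(σ_g + 1 + i) − m − 1 for i ∈ [0, σ_d − σ_g − 2]. Then d^fix is a Dyck path of length σ_d − σ_g − 2 and ‖d^fix‖ = ⌈h/2⌉ − 1. -/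
/-- A Dyck path of length `2n`: `d 0 = 0`, steps of `±1` on `[0, 2n]`, `d (2n) = 0`;
by convention the path is extended by zero beyond time `2n`. -/
def IsDyck (n : ℕ) (d : ℕ → ℕ) : Prop :=
  d 0 = 0 ∧ (∀ i, 2 * n ≤ i → d i = 0) ∧
  ∀ i < 2 * n, d (i + 1) = d i + 1 ∨ d i = d (i + 1) + 1

/-- The height ‖d‖ of a (zero-extended) Dyck path. -/
noncomputable def height (d : ℕ → ℕ) : ℕ := sSup (Set.range d)

/-- The `j`-th spinal subpath of `d`: `d_j^spn (i) = |d(ρ_j + 1 + i) − m| − 1` for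
`i ∈ [0, ρ_{j+1} − ρ_j − 2]`, extended by zero (here `(a - b) + (b - a) = |a - b|` in ℕ). -/
def dspn (d : ℕ → ℕ) (m : ℕ) (ρ : ℕ → ℕ) (j : ℕ) : ℕ → ℕ := fun i =>
  if i ≤ ρ (j + 1) - ρ j - 2
  then (d (ρ j + 1 + i) - m) + (m - d (ρ j + 1 + i)) - 1 else 0

lemma ivt_up' (d : ℕ → ℕ) (hstep : ∀ i, d (i+1) ≤ d i + 1) :
    ∀ b a c, a ≤ b → d a ≤ c → c ≤ d b → ∃ i, a ≤ i ∧ i ≤ b ∧ d i = c := by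
  intro b
  induction b with
  | zero =>
    intro a c hab h1 h2
    have ha : a = 0 := by omega
    subst ha
    exact ⟨0, le_rfl, le_rfl, le_antisymm h1 h2⟩
  | succ b ih =>
    intro a c hab h1 h2
    rcases Nat.eq_or_lt_of_le hab with heq | hlt
    · rw [heq] at h1
      exact ⟨b + 1, by omega, le_rfl, le_antisymm h1 h2⟩
    · have hab2 : a ≤ b := by omega
      by_cases hc : c ≤ d b
      · obtain ⟨i, hi1, hi2, hi3⟩ := ih a c hab2 h1 hc
        exact ⟨i, hi1, by omega, hi3⟩
      · have := hstep b
        exact ⟨b+1, by omega, le_rfl, by omega⟩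

lemma ivt_down' (d : ℕ → ℕ) (hstep : ∀ i, d i ≤ d (i+1) + 1) :
    ∀ b a c, a ≤ b → c ≤ d a → d b ≤ c → ∃ i, a ≤ i ∧ i ≤ b ∧ d i = c := by
  intro b
  induction b with
  | zero =>
    intro a c hab h1 h2
    have ha : a = 0 := by omega
    subst ha
    exact ⟨0, le_rfl, le_rfl, le_antisymm h2 h1⟩
  | succ b ih =>
    intro a c hab h1 h2
    rcases Nat.eq_or_lt_of_le hab with heq | hlt
    · rw [heq] at h1
      exact ⟨b + 1, by omega, le_rfl, le_antisymm h2 h1⟩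
    · have hab2 : a ≤ b := by omega
      by_cases hc : d b ≤ c
      · obtain ⟨i, hi1, hi2, hi3⟩ := ih a c hab2 h1 hc
        exact ⟨i, hi1, by omega, hi3⟩
      · have := hstep b
        exact ⟨b+1, by omega, le_rfl, by omega⟩

lemma dyck_parity (d : ℕ → ℕ) (n : ℕ)
    (hstep : ∀ i < 2 * n, d (i + 1) = d i + 1 ∨ d i = d (i + 1) + 1) :
    ∀ j, j ≤ 2 * n → (d j + j) % 2 = d 0 % 2 := by
  intro j
  induction j with
  | zero => intro _; simp
  | succ j ih =>
    intro hj
    have h1 := hstep j (by omega)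
    have h2 := ih (by omega)
    omega

/-- Let `d` be a Dyck path of length `2n` with height `h ≥ 1` and `m = ⌊h/2⌋`; with
`σ_max = min{i : d i = h}`, `σ_g = max{i ≤ σ_max : d i = m}`, `σ_d = min{i ≥ σ_max : d i = m}`,
the path `d^fix(i) = d(σ_g + 1 + i) − m − 1` on `[0, σ_d − σ_g − 2]` (extended by zero) is a
Dyck path of length `σ_d − σ_g − 2` of height `⌈h/2⌉ − 1`. -/
theorem dfix_is_dyck (n h m σmax σg σd : ℕ) (d : ℕ → ℕ)
    (hd : IsDyck n d) (hht : height d = h) (h1 : 1 ≤ h) (hm : m = h / 2)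
    (hσmax : σmax = sInf {i | d i = h})
    (hσg : σg = sSup {i | i ≤ σmax ∧ d i = m})
    (hσd : σd = sInf {i | σmax ≤ i ∧ d i = m}) :
    ∃ nf : ℕ, 2 * nf = σd - σg - 2 ∧
      IsDyck nf (fun i => if i ≤ σd - σg - 2 then d (σg + 1 + i) - m - 1 else 0) ∧
      height (fun i => if i ≤ σd - σg - 2 then d (σg + 1 + i) - m - 1 else 0)
        = (h + 1) / 2 - 1 := by
  obtain ⟨h0, hz, hs⟩ := hd
  have hstep_up : ∀ i, d (i+1) ≤ d i + 1 := by
    intro i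
    by_cases hi : i < 2 * n
    · rcases hs i hi with h | h <;> omega
    · have e1 := hz i (by omega)
      have e2 := hz (i+1) (by omega)
      omega
  have hstep_down : ∀ i, d i ≤ d (i+1) + 1 := by
    intro i
    by_cases hi : i < 2 * n
    · rcases hs i hi with h | h <;> omega
    · have e1 := hz i (by omega)
      have e2 := hz (i+1) (by omega)
      omega
  have hle_self : ∀ i, d i ≤ i := by
    intro i
    induction i with
    | zero => omega
    | succ i ih => have := hstep_up i; omega
  have hbdd : BddAbove (Set.range d) := ⟨2 * n, by
    rintro x ⟨i, rfl⟩
    by_cases hi : 2 * n ≤ i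
    · rw [hz i hi]; omega
    · have := hle_self i; omega⟩
  have hdh : ∀ i, d i ≤ h := by
    intro i
    rw [← hht]
    exact le_csSup hbdd ⟨i, rfl⟩
  have hmem : h ∈ Set.range d := by
    rw [← hht]
    exact Nat.sSup_mem ⟨d 0, 0, rfl⟩ hbdd
  obtain ⟨i0, hi0⟩ := hmem
  have hσmaxmem : d σmax = h := by
    rw [hσmax]
    exact Nat.sInf_mem (⟨i0, hi0⟩ : {i | d i = h}.Nonempty)
  have hσmax_lt : σmax < 2 * n := by
    by_contra hc
    have := hz σmax (by omega)
    omega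
  have hmh : m < h := by omega
  -- σg facts
  obtain ⟨ig, hig1, hig2, hig3⟩ := ivt_up' d hstep_up σmax 0 m (Nat.zero_le _)
    (by rw [h0]; omega) (by rw [hσmaxmem]; omega)
  have hσg_bdd : BddAbove {i | i ≤ σmax ∧ d i = m} := ⟨σmax, fun x hx => hx.1⟩
  have hσgmem : σg ≤ σmax ∧ d σg = m := by
    rw [hσg]
    exact Nat.sSup_mem (⟨ig, hig2, hig3⟩ : {i | i ≤ σmax ∧ d i = m}.Nonempty) hσg_bdd
  have hσg_max : ∀ i, i ≤ σmax → d i = m → i ≤ σg := by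
    intro i ha hb
    rw [hσg]
    exact le_csSup hσg_bdd ⟨ha, hb⟩
  -- σd facts
  obtain ⟨id0, hd1, hd2, hd3⟩ := ivt_down' d hstep_down (2 * n) σmax m (by omega)
    (by rw [hσmaxmem]; omega) (by rw [hz (2 * n) le_rfl]; omega)
  have hσdmem : σmax ≤ σd ∧ d σd = m := by
    rw [hσd]
    exact Nat.sInf_mem (⟨id0, hd1, hd3⟩ : {i | σmax ≤ i ∧ d i = m}.Nonempty)
  have hσd_min : ∀ i, σmax ≤ i → d i = m → σd ≤ i := by
    intro i ha hb
    rw [hσd]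
    exact Nat.sInf_le ⟨ha, hb⟩
  have hσd_le : σd ≤ 2 * n := le_trans (hσd_min id0 hd1 hd3) hd2
  have hgm : σg < σmax := by
    rcases Nat.lt_or_ge σg σmax with hc | hc
    · exact hc
    · have : σg = σmax := by omega
      rw [this] at hσgmem
      omega
  have hmd : σmax < σd := by
    rcases Nat.lt_or_ge σmax σd with hc | hc
    · exact hc
    · have : σd = σmax := by omega
      rw [this] at hσdmem
      omega
  -- interior strictly above m
  have hint : ∀ i, σg < i → i < σd → m < d i := by
    intro i hi1 hi2
    rcases le_or_gt i σmax with hc | hc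
    · by_contra hle
      push_neg at hle
      obtain ⟨j, hj1, hj2, hj3⟩ := ivt_up' d hstep_up σmax i m hc hle
        (by rw [hσmaxmem]; omega)
      have := hσg_max j hj2 hj3
      omega
    · by_contra hle
      push_neg at hle
      obtain ⟨j, hj1, hj2, hj3⟩ := ivt_down' d hstep_down i σmax m (by omega)
        (by rw [hσmaxmem]; omega) hle
      have := hσd_min j hj1 hj3
      omega
  -- parity
  have p1 := dyck_parity d n hs σg (by omega)
  have p2 := dyck_parity d n hs σd (by omega)
  have hL2 : σg + 2 ≤ σd := by omega
  have hnf : 2 * ((σd - σg - 2) / 2) = σd - σg - 2 := by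
    have e1 := hσgmem.2
    have e2 := hσdmem.2
    omega
  -- endpoint values
  have e1 : d (σg + 1) = m + 1 := by
    have hstep := hs σg (by omega)
    have hi := hint (σg + 1) (by omega) (by omega)
    have := hσgmem.2
    omega
  have e2 : d (σd - 1) = m + 1 := by
    have hrw : σd - 1 + 1 = σd := by omega
    have hstep := hs (σd - 1) (by omega)
    rw [hrw] at hstep
    have hi := hint (σd - 1) (by omega) (by omega)
    have := hσdmem.2
    omega
  refine ⟨(σd - σg - 2) / 2, hnf, ⟨?_, ?_, ?_⟩, ?_⟩
  · -- starts at 0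
    show (if 0 ≤ σd - σg - 2 then d (σg + 1 + 0) - m - 1 else 0) = 0
    rw [if_pos (Nat.zero_le _)]
    have : σg + 1 + 0 = σg + 1 := by omega
    rw [this]
    omega
  · -- zero beyond 2 nf
    intro i hi
    show (if i ≤ σd - σg - 2 then d (σg + 1 + i) - m - 1 else 0) = 0
    by_cases hiL : i ≤ σd - σg - 2
    · have hieq : σg + 1 + i = σd - 1 := by omega
      rw [if_pos hiL, hieq]
      omega
    · rw [if_neg hiL]
  · -- steps
    intro i hi
    have hiL : i < σd - σg - 2 := by omega
    show (if i + 1 ≤ σd - σg - 2 then d (σg + 1 + (i + 1)) - m - 1 else 0) =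
        (if i ≤ σd - σg - 2 then d (σg + 1 + i) - m - 1 else 0) + 1 ∨
      (if i ≤ σd - σg - 2 then d (σg + 1 + i) - m - 1 else 0) =
        (if i + 1 ≤ σd - σg - 2 then d (σg + 1 + (i + 1)) - m - 1 else 0) + 1
    rw [if_pos (by omega : i + 1 ≤ σd - σg - 2), if_pos (by omega : i ≤ σd - σg - 2)]
    have hrw : σg + 1 + (i + 1) = σg + 1 + i + 1 := by omega
    rw [hrw]
    have hstep := hs (σg + 1 + i) (by omega)
    have hi1 := hint (σg + 1 + i) (by omega) (by omega)
    have hi2 := hint (σg + 1 + i + 1) (by omega) (by omega)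
    omega
  · -- height
    have hub : ∀ x ∈ Set.range (fun i => if i ≤ σd - σg - 2 then d (σg + 1 + i) - m - 1 else 0),
        x ≤ h - m - 1 := by
      rintro x ⟨i, rfl⟩
      by_cases hiL : i ≤ σd - σg - 2
      · simp only [if_pos hiL]
        have := hdh (σg + 1 + i)
        omega
      · simp only [if_neg hiL]
        omega
    have hach : (h - m - 1) ∈ Set.range
        (fun i => if i ≤ σd - σg - 2 then d (σg + 1 + i) - m - 1 else 0) := by
      refine ⟨σmax - σg - 1, ?_⟩
      have hiL : σmax - σg - 1 ≤ σd - σg - 2 := by omega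
      have hieq : σg + 1 + (σmax - σg - 1) = σmax := by omega
      simp only [if_pos hiL, hieq, hσmaxmem]
    have hhe : height (fun i => if i ≤ σd - σg - 2 then d (σg + 1 + i) - m - 1 else 0)
        = h - m - 1 := by
      unfold height
      refine le_antisymm (csSup_le ⟨_, hach⟩ hub) (le_csSup ⟨h - m - 1, hub⟩ hach)
    rw [hhe]
    omega
end

section
/- Let d be a Dyck path of height h ≥ 1 and m = ⌊h/2⌋. Let σ_max = min{i : d(i) = h}, σ_d = min{i ≥ σ_max : d(i) = m}, σ_last = max{i : d(i) = m, i ≥ σ_max}, and list the visits of d to level m in [σ_d, σ_last] as σ_d = ρ_1 < … < ρ_{ℓ+1} = σ_last. For 1 ≤ j ≤ ℓ set ε_j = d(ρ_j + 1) − d(ρ_j), v_j = (3 − ε_j)/2, and d_j^spn(i) = |d(ρ_j + 1 + i) − m| − 1 for i ∈ [0, ρ_{j+1} − ρ_j − 2]. Then each d_j^spn is a Dyck path and ‖d_j^spn‖ ≤ (h − v_j)/2; equivalently, ‖d_j^spn‖ ≤ ⌈h/2⌉ − 1 if ε_j = 1 and ‖d_j^spn‖ ≤ ⌊h/2⌋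 − 1 if ε_j = −1. -/

lemma dyck_le (n : ℕ) (d : ℕ → ℕ) (hd : IsDyck n d) : ∀ i, d i ≤ 2 * n := by
  obtain ⟨h0, hz, hs⟩ := hd
  have key : ∀ i, d i ≤ i := by
    intro i
    induction i with
    | zero => omega
    | succ k ih =>
      by_cases hk : k < 2 * n
      · rcases hs k hk with h | h <;> omega
      · rw [hz (k + 1) (by omega)]; omega
  intro i
  by_cases hi : 2 * n ≤ i
  · rw [hz i hi]; omega
  · exact (key i).trans (by omega)

/-- Let `d` be a Dyck path of height `h ≥ 1`, `m = ⌊h/2⌋`, `σ_max = min{i : d i = h}`,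
`σ_d = min{i ≥ σ_max : d i = m}`, `σ_last = max{i ≥ σ_max : d i = m}`, and let
`σ_d = ρ_1 < … < ρ_{ℓ+1} = σ_last` enumerate the visits of `d` to level `m` in `[σ_d, σ_last]`.
For `1 ≤ j ≤ ℓ` with `ε_j = d(ρ_j + 1) − d(ρ_j)` and `v_j = (3 − ε_j)/2`, the path
`d_j^spn(i) = |d(ρ_j + 1 + i) − m| − 1` on `[0, ρ_{j+1} − ρ_j − 2]` is a Dyck path with
`2‖d_j^spn‖ + v_j ≤ h` (i.e. `‖d_j^spn‖ ≤ (h − v_j)/2`); equivalently `‖d_j^spn‖ ≤ ⌈h/2⌉ − 1`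
if `ε_j = 1` and `‖d_j^spn‖ ≤ ⌊h/2⌋ − 1` if `ε_j = −1`. -/
theorem dspn_is_dyck (n h m σmax σd σlast ℓ : ℕ) (ρ : ℕ → ℕ) (d : ℕ → ℕ)
    (hd : IsDyck n d) (hht : height d = h) (h1 : 1 ≤ h) (hm : m = h / 2)
    (hσmax : σmax = sInf {i | d i = h})
    (hσd : σd = sInf {i | σmax ≤ i ∧ d i = m})
    (hσlast : σlast = sSup {i | σmax ≤ i ∧ d i = m})
    (hρ1 : ρ 1 = σd) (hρlast : ρ (ℓ + 1) = σlast)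
    (hρmono : ∀ j, 1 ≤ j → j ≤ ℓ → ρ j < ρ (j + 1))
    (hρmem : ∀ j, 1 ≤ j → j ≤ ℓ + 1 → σd ≤ ρ j ∧ ρ j ≤ σlast ∧ d (ρ j) = m)
    (hρall : ∀ i, σd ≤ i → i ≤ σlast → d i = m → ∃ j, 1 ≤ j ∧ j ≤ ℓ + 1 ∧ ρ j = i) :
    ∀ j, 1 ≤ j → j ≤ ℓ →
      ∃ nj : ℕ, 2 * nj = ρ (j + 1) - ρ j - 2 ∧
        IsDyck nj (dspn d m ρ j) ∧
        2 * height (dspn d m ρ j) +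
          (if d (ρ j + 1) = d (ρ j) + 1 then 1 else 2) ≤ h ∧
        (if d (ρ j + 1) = d (ρ j) + 1
          then height (dspn d m ρ j) + 1 ≤ (h + 1) / 2
          else height (dspn d m ρ j) + 1 ≤ h / 2) := by

  intro j hj1 hjl
  have hle : ∀ i, d i ≤ 2 * n := dyck_le n d hd
  obtain ⟨h0, hz, hs⟩ := hd
  have hdh : ∀ i, d i ≤ h := by
    intro i
    have : d i ≤ sSup (Set.range d) :=
      le_csSup ⟨2 * n, by rintro x ⟨k, rfl⟩; exact hle k⟩ ⟨i, rfl⟩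
    rw [← hht]; exact this
  have hmono : ∀ k k', 1 ≤ k → k ≤ k' → k' ≤ ℓ + 1 → ρ k ≤ ρ k' := by
    intro k k' h1k
    induction k' with
    | zero => omega
    | succ p ih =>
      intro hkk' hk'l
      rcases Nat.lt_or_ge k (p + 1) with hlt | hge
      · have h1p : 1 ≤ p := by omega
        have := hρmono p h1p (by omega)
        have := ih (by omega) (by omega)
        omega
      · have hk : k = p + 1 := by omega
        rw [hk]
  rcases Nat.eq_zero_or_pos m with hm0 | hm1
  · exfalso
    have hub : ¬ BddAbove {i | σmax ≤ i ∧ d i = m} := by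
      rintro ⟨N, hN⟩
      have hmem : σmax + 2 * n + N + 1 ∈ {i | σmax ≤ i ∧ d i = m} :=
        ⟨by omega, by rw [hz _ (by omega)]; omega⟩
      have := hN hmem
      omega
    have hσl0 : σlast = 0 := by
      rw [hσlast, csSup_of_not_bddAbove hub, csSup_empty]; rfl
    obtain ⟨-, h2, -⟩ := hρmem (j + 1) (by omega) (by omega)
    have h3 := hρmono j hj1 hjl
    omega
  obtain ⟨hσda, haσl, hda⟩ := hρmem j hj1 (by omega)
  obtain ⟨hσdb, hbσl, hdb⟩ := hρmem (j + 1) (by omega) (by omega)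
  have hab : ρ j < ρ (j + 1) := hρmono j hj1 hjl
  set a := ρ j with ha_def
  set b := ρ (j + 1) with hb_def
  have hb2n : b < 2 * n := by
    rcases Nat.lt_or_ge b (2 * n) with h | h
    · exact h
    · have := hz b h; omega
  set f : ℕ → ℕ := fun i => (d i - m) + (m - d i) with hf
  have hfa : f a = 0 := by simp only [hf]; omega
  have hfb : f b = 0 := by simp only [hf]; omega
  have hstep : ∀ i, a ≤ i → i < b → (f (i + 1) = f i + 1 ∨ f i = f (i + 1) + 1) := by
    intro i hai hib
    have := hs i (by omega)
    simp only [hf]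
    omega
  have hint : ∀ i, a < i → i < b → d i ≠ m := by
    intro i hai hib hdm
    obtain ⟨k, h1k, hkl, hki⟩ := hρall i (by omega) (by omega) hdm
    rcases le_or_gt k j with hkj | hjk
    · have := hmono k j h1k hkj (by omega); omega
    · have := hmono (j + 1) k (by omega) hjk hkl; omega
  have hpos : ∀ i, a < i → i < b → 1 ≤ f i := by
    intro i h1 h2
    have := hint i h1 h2
    simp only [hf]
    omega
  have hpar : ∀ k, k ≤ b - a → f (a + k) % 2 = k % 2 := by
    intro k
    induction k with
    | zero => intro _; simp [hfa]
    | succ p ih =>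
      intro hp
      have h1 := ih (by omega)
      have h2 := hstep (a + p) (by omega) (by omega)
      rw [show a + (p + 1) = a + p + 1 by omega]
      omega
  have heven : (b - a) % 2 = 0 := by
    have := hpar (b - a) le_rfl
    rw [show a + (b - a) = b by omega] at this
    omega
  have hb2 : a + 2 ≤ b := by omega
  have hfa1 : f (a + 1) = 1 := by
    have := hstep a (by omega) (by omega)
    omega
  have hfb1 : f (b - 1) = 1 := by
    have := hstep (b - 1) (by omega) (by omega)
    rw [show b - 1 + 1 = b by omega] at this
    omega
  have hdspn : ∀ i, dspn d m ρ j i = if i ≤ b - a - 2 then f (a + 1 + i) - 1 else 0 := by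
    intro i; rfl
  refine ⟨(b - a - 2) / 2, by omega, ⟨?_, ?_, ?_⟩, ?_⟩
  · rw [hdspn, if_pos (by omega)]
    rw [show a + 1 + 0 = a + 1 by omega, hfa1]
  · intro i hi
    rw [hdspn]
    split_ifs with h
    · have hieq : i = b - a - 2 := by omega
      rw [hieq, show a + 1 + (b - a - 2) = b - 1 by omega, hfb1]
    · rfl
  · intro i hi
    rw [hdspn, hdspn, if_pos (by omega), if_pos (by omega)]
    have h1 := hstep (a + 1 + i) (by omega) (by omega)
    have h2 := hpos (a + 1 + i) (by omega) (by omega)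
    have h3 := hpos (a + 1 + i + 1) (by omega) (by omega)
    rw [show a + 1 + (i + 1) = a + 1 + i + 1 by omega]
    omega
  · have hupdown : d (a + 1) = m + 1 ∨ d (a + 1) + 1 = m := by
      have := hs a (by omega)
      omega
    have hheight : height (dspn d m ρ j) = sSup (Set.range (dspn d m ρ j)) := rfl
    rcases hupdown with hup | hdown
    · have habove : ∀ k, 1 ≤ k → a + k < b → m < d (a + k) := by
        intro k
        induction k with
        | zero => omega
        | succ p ih =>
          intro _ hpb
          rcases Nat.eq_zero_or_pos p with rfl | hp
          · rw [show a + (0 + 1) = a + 1 by omega]; omega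
          · have h1 := ih (by omega) (by omega)
            have h2 := hs (a + p) (by omega)
            have h3 := hint (a + p + 1) (by omega) (by omega)
            rw [show a + (p + 1) = a + p + 1 by omega]
            omega
      have hbound : ∀ i, dspn d m ρ j i ≤ h - m - 1 := by
        intro i
        rw [hdspn]
        split_ifs with hi
        · have h1 := hdh (a + 1 + i)
          have h2 : m < d (a + 1 + i) := by
            have := habove (1 + i) (by omega) (by omega)
            rwa [show a + (1 + i) = a + 1 + i by omega] at this
          simp only [hf]
          omega
        · omega
      have hH : height (dspn d m ρ j) ≤ h - m - 1 := by
        rw [hheight]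
        exact csSup_le (Set.range_nonempty _) (by rintro x ⟨i, rfl⟩; exact hbound i)
      have hcond : d (a + 1) = d a + 1 := by omega
      rw [if_pos hcond, if_pos hcond]
      omega
    · have hbelow : ∀ k, 1 ≤ k → a + k < b → d (a + k) < m := by
        intro k
        induction k with
        | zero => omega
        | succ p ih =>
          intro _ hpb
          rcases Nat.eq_zero_or_pos p with rfl | hp
          · rw [show a + (0 + 1) = a + 1 by omega]; omega
          · have h1 := ih (by omega) (by omega)
            have h2 := hs (a + p) (by omega)
            have h3 := hint (a + p + 1) (by omega) (by omega)
            rw [show a + (p + 1) = a + p + 1 by omega]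
            omega
      have hbound : ∀ i, dspn d m ρ j i ≤ m - 1 := by
        intro i
        rw [hdspn]
        split_ifs with hi
        · have h2 : d (a + 1 + i) < m := by
            have := hbelow (1 + i) (by omega) (by omega)
            rwa [show a + (1 + i) = a + 1 + i by omega] at this
          simp only [hf]
          omega
        · omega
      have hH : height (dspn d m ρ j) ≤ m - 1 := by
        rw [hheight]
        exact csSup_le (Set.range_nonempty _) (by rintro x ⟨i, rfl⟩; exact hbound i)
      have hcond : ¬ d (a + 1) = d a + 1 := by omega
      rw [if_neg hcond, if_neg hcond]
      omega
end
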